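/- Exact binomial converse: for 0 < ε < 1, 0 < Q < 1/2, and any n ≥ 1, every (ε,Q)-correct one-way IR code of block length n satisfies log|M| ≥ n h(Q) + ( n(1-Q) - F^{-1}(ε(1 + 1/√n); n, 1-Q) - 1 ) log((1-Q)/Q) - (1/2) log n - log(1/ε), provided ε(1+1/√n) < 1. -/

import Mathlib

/-!
Split the pairs `(x, y)` by their number `a` of agreeing coordinates and let
`K = F⁻¹(ε(1 + 1/√n); n, 1 - Q)`. The pairs with `a > K + 1` have total probability
`1 - F(K + 1; n, 1 - Q) < 1 - ε(1 + 1/√n)`, so a code that is correct with probability `1 - ε`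
must gain more than `ε/√n` on the pairs with `a ≤ K + 1`. Each of these has probability at most
`(1-Q)^(K+1) Q^(n-K-1) / 2^n`, and since for every received word and message the decoder's
outputs sum to one, they contribute at most `2^n |M|` times that. Hence
`ε/√n ≤ (1-Q)^(K+1) Q^(n-K-1) |M|`, and the bound is the logarithm of this, because
`-log((1-Q)^(K+1) Q^(n-K-1)) = n h(Q) + (n(1-Q) - K - 1) log((1-Q)/Q)`.
-/

open scoped BigOperators
noncomputable section

/-- Binomial cumulative distribution function `F(k; n, p) = Σ_{ℓ=0}^k C(n,ℓ) pˡ (1-p)^{n-ℓ}`. -/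
def binomCDF (k n : ℕ) (p : ℝ) : ℝ :=
  ∑ ℓ ∈ Finset.range (k + 1), (n.choose ℓ : ℝ) * p ^ ℓ * (1 - p) ^ (n - ℓ)

/-- `F⁻¹(ε; n, p) = max{k ∈ ℕ | F(k; n, p) ≤ ε}`. -/
def binomCDFInv (ε : ℝ) (n : ℕ) (p : ℝ) : ℕ :=
  sSup {k : ℕ | binomCDF k n p ≤ ε}

/-- Binary entropy. -/
def binEnt (Q : ℝ) : ℝ := -(Q * Real.log Q) - (1 - Q) * Real.log (1 - Q)

open Finset

section Agreements

variable {ι : Type*} [Fintype ι]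

def agreements (x y : ι → Bool) : ℕ := #{i | x i = y i}

lemma agreements_le_card (x y : ι → Bool) : agreements x y ≤ Fintype.card ι :=
  card_filter_le _ _

lemma card_disagree (x y : ι → Bool) :
    #{i | ¬x i = y i} = Fintype.card ι - agreements x y := by
  have := card_filter_add_card_filter_not (s := univ) (fun i => x i = y i)
  rw [card_univ] at this
  unfold agreements
  omega

lemma prod_ite_eq_pow_agreements {R : Type*} [CommMonoid R] (a b : R) (x y : ι → Bool) :
    ∏ i, (if x i = y i then a else b)
      = a ^ agreements x y * b ^ (Fintype.card ι - agreements x y) := by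
  rw [prod_ite, prod_const, prod_const, card_disagree]
  rfl

variable [DecidableEq ι]

lemma bijective_filter_apply_eq (y : ι → Bool) :
    Function.Bijective fun x : ι → Bool => ({i | x i = y i} : Finset ι) := by
  refine ⟨fun x x' h => funext fun i => ?_, fun s => ⟨fun i => if i ∈ s then y i else !y i, ?_⟩⟩
  · have := congrArg (i ∈ ·) h
    simp only [mem_filter, mem_univ, true_and, eq_iff_iff] at this
    cases hx : x i <;> cases hx' : x' i <;> cases y i <;> simp_all
  · ext i
    by_cases hi : i ∈ s <;> simp [hi]

lemma sum_apply_agreements {M : Type*} [AddCommMonoid M] (f : ℕ → M) (y : ι → Bool) :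
    ∑ x : ι → Bool, f (agreements x y)
      = ∑ j ∈ range (Fintype.card ι + 1), (Fintype.card ι).choose j • f j := by
  rw [Fintype.sum_bijective _ (bijective_filter_apply_eq y) (fun x => f (agreements x y))
    (fun s => f #s) fun _ => rfl, ← powerset_univ, sum_powerset_apply_card, card_univ]

end Agreements

lemma binomCDF_self (n : ℕ) (p : ℝ) : binomCDF n n p = 1 := by
  have h := add_pow p (1 - p) n
  rw [add_sub_cancel, one_pow] at h
  exact (sum_congr rfl fun j _ => by ring).trans h.symm

lemma binomCDF_of_le {n k : ℕ} (h : n ≤ k) (p : ℝ) : binomCDF k n p = 1 := by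
  rw [← binomCDF_self n p, binomCDF, binomCDF]
  refine (sum_subset (range_subset_range.2 (by omega)) fun j _ hj => ?_).symm
  rw [Nat.choose_eq_zero_of_lt (by simpa using hj), Nat.cast_zero, zero_mul, zero_mul]

lemma sum_ite_lt_eq_one_sub_binomCDF {n k : ℕ} (h : k ≤ n) (p : ℝ) :
    ∑ j ∈ range (n + 1), (if k < j then (n.choose j : ℝ) * p ^ j * (1 - p) ^ (n - j) else 0)
      = 1 - binomCDF k n p := by
  calc _ = ∑ j ∈ Ico (k + 1) (n + 1), (n.choose j : ℝ) * p ^ j * (1 - p) ^ (n - j) := by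
        rw [← sum_filter]
        congr 1
        ext j
        simp only [mem_filter, mem_range, mem_Ico]
        omega
    _ = binomCDF n n p - binomCDF k n p := by
        rw [binomCDF, binomCDF, ← sum_range_add_sum_Ico _ (by omega : k + 1 ≤ n + 1)]
        ring
    _ = 1 - binomCDF k n p := by rw [binomCDF_self]

lemma binomCDFInv_lt {ε : ℝ} (hε : ε < 1) {n : ℕ} (hn : 1 ≤ n) (p : ℝ) :
    binomCDFInv ε n p < n := by
  refine Nat.lt_of_le_sub_one hn (csSup_le' fun k hk => ?_)
  by_contra! hkn
  have : binomCDF k n p ≤ ε := hk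
  rw [binomCDF_of_le (by omega)] at this
  linarith

lemma lt_binomCDF_binomCDFInv_succ {ε : ℝ} (hε : ε < 1) (n : ℕ) (p : ℝ) :
    ε < binomCDF (binomCDFInv ε n p + 1) n p := by
  have hbdd : BddAbove {k : ℕ | binomCDF k n p ≤ ε} := by
    refine ⟨n, fun k hk => ?_⟩
    by_contra! hkn
    have : binomCDF k n p ≤ ε := hk
    rw [binomCDF_of_le hkn.le] at this
    linarith
  by_contra! h
  have := le_csSup hbdd h
  rw [← binomCDFInv] at this
  omega

lemma pow_mul_pow_sub_le_pow_mul_pow_sub {u v : ℝ} (hu : 0 ≤ u) (huv : u ≤ v) {a b n : ℕ}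
    (hab : a ≤ b) (hbn : b ≤ n) : v ^ a * u ^ (n - a) ≤ v ^ b * u ^ (n - b) := by
  have hv : 0 ≤ v := hu.trans huv
  calc v ^ a * u ^ (n - a) = v ^ a * u ^ (b - a) * u ^ (n - b) := by
        rw [mul_assoc, ← pow_add, show b - a + (n - b) = n - a by omega]
    _ ≤ v ^ a * v ^ (b - a) * u ^ (n - b) := by gcongr
    _ = v ^ b * u ^ (n - b) := by rw [← pow_add, Nat.add_sub_cancel' hab]

section BinarySymmetricSource

variable {ι : Type*} [Fintype ι]

/-- The `ι`-fold i.i.d. extension of `P_{XY}^Q`. -/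
def bscWeight (Q : ℝ) (x y : ι → Bool) : ℝ :=
  ∏ i, if x i = y i then (1 - Q) / 2 else Q / 2

lemma bscWeight_eq (Q : ℝ) (x y : ι → Bool) :
    bscWeight Q x y
      = (1 - Q) ^ agreements x y * Q ^ (Fintype.card ι - agreements x y)
        / 2 ^ Fintype.card ι := by
  rw [bscWeight, prod_ite_eq_pow_agreements, div_pow, div_pow, div_mul_div_comm, ← pow_add,
    Nat.add_sub_cancel' (agreements_le_card x y)]

lemma bscWeight_nonneg {Q : ℝ} (hQ0 : 0 ≤ Q) (hQ1 : Q ≤ 1) (x y : ι → Bool) :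
    0 ≤ bscWeight Q x y :=
  prod_nonneg fun i _ => by split_ifs <;> linarith

lemma bscWeight_le_of_agreements_le {Q : ℝ} (hQ0 : 0 ≤ Q) (hQ : Q ≤ 1 / 2) {k : ℕ}
    {x y : ι → Bool} (h : agreements x y ≤ k) (hk : k ≤ Fintype.card ι) :
    bscWeight Q x y ≤ (1 - Q) ^ k * Q ^ (Fintype.card ι - k) / 2 ^ Fintype.card ι := by
  rw [bscWeight_eq]
  gcongr ?_ / _
  exact pow_mul_pow_sub_le_pow_mul_pow_sub hQ0 (by linarith) h hk

variable [DecidableEq ι]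

lemma sum_sum_ite_lt_agreements_bscWeight (Q : ℝ) {k : ℕ} (hk : k ≤ Fintype.card ι) :
    ∑ x : ι → Bool, ∑ y : ι → Bool,
        (if k < agreements x y then bscWeight Q x y else 0)
      = 1 - binomCDF k (Fintype.card ι) (1 - Q) := by
  let g : ℕ → ℝ := fun j =>
    if k < j then (1 - Q) ^ j * Q ^ (Fintype.card ι - j) / 2 ^ Fintype.card ι else 0
  have hy : ∀ y : ι → Bool, ∑ x : ι → Bool,
      (if k < agreements x y then bscWeight Q x y else 0) = ∑ x, g (agreements x y) :=
    fun y => sum_congr rfl fun x _ => by simp only [g, bscWeight_eq]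
  rw [sum_comm, sum_congr rfl fun y _ => (hy y).trans (sum_apply_agreements g y), sum_const,
    card_univ, Fintype.card_fun, Fintype.card_bool, ← sum_ite_lt_eq_one_sub_binomCDF hk,
    sub_sub_cancel, smul_sum]
  refine sum_congr rfl fun j _ => ?_
  simp only [g, nsmul_eq_mul, Nat.cast_pow, Nat.cast_ofNat]
  split_ifs
  · field_simp
  · simp

end BinarySymmetricSource

section SuccessProbability

variable {X Y M : Type*} [Fintype X] [Fintype Y] [Fintype M]
  {e : X → M → ℝ} {d : Y → M → X → ℝ}

def successProb (W : X → Y → ℝ) (e : X → M → ℝ) (d : Y → M → X → ℝ) : ℝ :=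
  ∑ x, ∑ y, ∑ m, W x y * e x m * d y m x

lemma sum_sum_sum_mul_le_card (he0 : ∀ x m, 0 ≤ e x m) (he1 : ∀ x, ∑ m, e x m = 1)
    (hd0 : ∀ y m x, 0 ≤ d y m x) (hd1 : ∀ y m, ∑ x, d y m x = 1) :
    ∑ x, ∑ y, ∑ m, e x m * d y m x ≤ Fintype.card Y * Fintype.card M := by
  have he_le : ∀ x m, e x m ≤ 1 := fun x m =>
    he1 x ▸ single_le_sum (fun m _ => he0 x m) (mem_univ m)
  calc ∑ x, ∑ y, ∑ m, e x m * d y m x = ∑ y, ∑ m, ∑ x, e x m * d y m x := by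
        rw [sum_comm]
        exact sum_congr rfl fun y _ => sum_comm
    _ ≤ ∑ y : Y, ∑ m : M, ∑ x, d y m x := by
        gcongr with y _ m _ x _
        exact mul_le_of_le_one_left (hd0 y m x) (he_le x m)
    _ = Fintype.card Y * Fintype.card M := by simp [hd1]

lemma successProb_le {W V : X → Y → ℝ} {B : ℝ} (hV : ∀ x y, 0 ≤ V x y) (hB : 0 ≤ B)
    (hWV : ∀ x y, W x y ≤ V x y + B)
    (he0 : ∀ x m, 0 ≤ e x m) (he1 : ∀ x, ∑ m, e x m = 1)
    (hd0 : ∀ y m x, 0 ≤ d y m x) (hd1 : ∀ y m, ∑ x, d y m x = 1) :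
    successProb W e d ≤ ∑ x, ∑ y, V x y + B * (Fintype.card Y * Fintype.card M) := by
  have hd_le : ∀ y m x, d y m x ≤ 1 := fun y m x =>
    hd1 y m ▸ single_le_sum (fun x _ => hd0 y m x) (mem_univ x)
  calc successProb W e d
      ≤ ∑ x, ∑ y, ∑ m, (V x y * e x m + B * (e x m * d y m x)) := by
        unfold successProb
        gcongr with x _ y _ m _
        calc W x y * e x m * d y m x ≤ (V x y + B) * e x m * d y m x :=
              mul_le_mul_of_nonneg_right (mul_le_mul_of_nonneg_right (hWV x y) (he0 x m))
                (hd0 y m x)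
          _ = V x y * e x m * d y m x + B * (e x m * d y m x) := by ring
          _ ≤ V x y * e x m + B * (e x m * d y m x) :=
              add_le_add_left
                (mul_le_of_le_one_right (mul_nonneg (hV x y) (he0 x m)) (hd_le y m x)) _
    _ = ∑ x, ∑ y, V x y + B * ∑ x, ∑ y, ∑ m, e x m * d y m x := by
        simp only [sum_add_distrib, ← mul_sum, he1, mul_one]
    _ ≤ ∑ x, ∑ y, V x y + B * (Fintype.card Y * Fintype.card M) := by
        gcongr
        exact sum_sum_sum_mul_le_card he0 he1 hd0 hd1

end SuccessProbability

lemma successProb_bscWeight_le {ι M : Type*} [Fintype ι] [DecidableEq ι] [Fintype M]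
    {e : (ι → Bool) → M → ℝ} {d : (ι → Bool) → M → (ι → Bool) → ℝ} {Q : ℝ} (hQ0 : 0 ≤ Q)
    (hQ : Q ≤ 1 / 2) {k : ℕ} (hk : k ≤ Fintype.card ι)
    (he0 : ∀ x m, 0 ≤ e x m) (he1 : ∀ x, ∑ m, e x m = 1)
    (hd0 : ∀ y m x, 0 ≤ d y m x) (hd1 : ∀ y m, ∑ x, d y m x = 1) :
    successProb (bscWeight Q) e d
      ≤ 1 - binomCDF k (Fintype.card ι) (1 - Q)
        + (1 - Q) ^ k * Q ^ (Fintype.card ι - k) * Fintype.card M := by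
  set B := (1 - Q) ^ k * Q ^ (Fintype.card ι - k) / 2 ^ Fintype.card ι
  have hB : 0 ≤ B := div_nonneg (mul_nonneg (pow_nonneg (by linarith) _) (pow_nonneg hQ0 _))
    (by positivity)
  have hV : ∀ x y : ι → Bool, 0 ≤ if k < agreements x y then bscWeight Q x y else 0 :=
    fun x y => ite_nonneg (bscWeight_nonneg hQ0 (by linarith) x y) le_rfl
  have hWV : ∀ x y : ι → Bool,
      bscWeight Q x y ≤ (if k < agreements x y then bscWeight Q x y else 0) + B := by
    intro x y
    split_ifs with h
    · exact le_add_of_nonneg_right hB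
    · rw [zero_add]
      exact bscWeight_le_of_agreements_le hQ0 hQ (not_lt.1 h) hk
  have hcard : B * (Fintype.card (ι → Bool) * Fintype.card M)
      = (1 - Q) ^ k * Q ^ (Fintype.card ι - k) * Fintype.card M := by
    simp only [B, Fintype.card_fun, Fintype.card_bool]
    push_cast
    field_simp
  calc successProb (bscWeight Q) e d ≤ _ := successProb_le hV hB hWV he0 he1 hd0 hd1
    _ = _ := by rw [sum_sum_ite_lt_agreements_bscWeight Q hk, hcard]

lemma log_pow_mul_pow_sub_eq {Q : ℝ} (hQ0 : 0 < Q) (hQ1 : Q < 1) {k n : ℕ} (hk : k ≤ n) :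
    Real.log ((1 - Q) ^ k * Q ^ (n - k))
      = -(n * binEnt Q + (n * (1 - Q) - k) * Real.log ((1 - Q) / Q)) := by
  have h1Q : 0 < 1 - Q := by linarith
  rw [Real.log_mul (by positivity) (by positivity), Real.log_pow, Real.log_pow, Nat.cast_sub hk,
    Real.log_div h1Q.ne' hQ0.ne', binEnt]
  ring

theorem exact_binomial_converse_general {M : Type*} [Fintype M]
    (n : ℕ) (hn : 1 ≤ n) (ε Q : ℝ) (hε0 : 0 < ε)
    (hQ0 : 0 < Q) (hQ1 : Q < 1/2)
    (hεn : ε * (1 + 1 / Real.sqrt n) < 1)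
    (e : (Fin n → Bool) → M → ℝ) (he0 : ∀ xs m, 0 ≤ e xs m)
    (he1 : ∀ xs, ∑ m, e xs m = 1)
    (d : (Fin n → Bool) → M → (Fin n → Bool) → ℝ) (hd0 : ∀ ys m xs, 0 ≤ d ys m xs)
    (hd1 : ∀ ys m, ∑ xs, d ys m xs = 1)
    (hcorrect : 1 - ε ≤ ∑ xs : Fin n → Bool, ∑ ys : Fin n → Bool, ∑ m : M,
      (∏ i, (if xs i = ys i then (1 - Q)/2 else Q/2)) * e xs m * d ys m xs) :
    n * binEnt Q
      + (n * (1 - Q) - (binomCDFInv (ε * (1 + 1 / Real.sqrt n)) n (1 - Q) : ℝ) - 1)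
          * Real.log ((1 - Q) / Q)
      - (1/2) * Real.log n - Real.log (1/ε)
      ≤ Real.log (Fintype.card M) := by
  set K := binomCDFInv (ε * (1 + 1 / Real.sqrt n)) n (1 - Q)
  have hK : K + 1 ≤ n := binomCDFInv_lt hεn hn _
  have hF := lt_binomCDF_binomCDFInv_succ hεn n (1 - Q)
  set B := (1 - Q) ^ (K + 1) * Q ^ (n - (K + 1))
  have hB : 0 < B := mul_pos (pow_pos (by linarith) _) (pow_pos hQ0 _)
  have hsqrt : 0 < Real.sqrt n := Real.sqrt_pos.2 (by exact_mod_cast hn)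
  have hkey : ε / Real.sqrt n ≤ B * Fintype.card M := by
    have hsucc := (hcorrect : 1 - ε ≤ successProb (bscWeight Q) e d).trans
      (successProb_bscWeight_le hQ0.le hQ1.le ((Fintype.card_fin n).symm ▸ hK) he0 he1 hd0 hd1)
    rw [Fintype.card_fin] at hsucc
    have hε : ε / Real.sqrt n = ε * (1 + 1 / Real.sqrt n) - ε := by field_simp; ring
    linarith
  have hlog := Real.log_le_log (by positivity) ((div_le_iff₀' hB).2 hkey)
  rw [Real.log_div (by positivity) hB.ne', Real.log_div hε0.ne' hsqrt.ne',
    Real.log_sqrt (Nat.cast_nonneg n), log_pow_mul_pow_sub_eq hQ0 (by linarith) hK] at hlog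
  rw [one_div ε, Real.log_inv]
  push_cast at hlog
  linarith

/-- exact binomial converse. For `0 < ε < 1`, `0 < Q < 1/2` and
`n ≥ 1`, every (ε,Q)-correct one-way IR code of block length `n` satisfies
`log|M| ≥ n h(Q) + (n(1-Q) - F⁻¹(ε(1+1/√n); n, 1-Q) - 1) log((1-Q)/Q)
  - (1/2) log n - log(1/ε)`, provided `ε(1+1/√n) < 1`. -/
theorem exact_binomial_converse {M : Type*} [Fintype M]
    (n : ℕ) (hn : 1 ≤ n) (ε Q : ℝ) (hε0 : 0 < ε) (hε1 : ε < 1)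
    (hQ0 : 0 < Q) (hQ1 : Q < 1/2)
    (hεn : ε * (1 + 1 / Real.sqrt n) < 1)
    (e : (Fin n → Bool) → M → ℝ) (he0 : ∀ xs m, 0 ≤ e xs m)
    (he1 : ∀ xs, ∑ m, e xs m = 1)
    (d : (Fin n → Bool) → M → (Fin n → Bool) → ℝ) (hd0 : ∀ ys m xs, 0 ≤ d ys m xs)
    (hd1 : ∀ ys m, ∑ xs, d ys m xs = 1)
    (hcorrect : 1 - ε ≤ ∑ xs : Fin n → Bool, ∑ ys : Fin n → Bool, ∑ m : M,
      (∏ i, (if xs i = ys i then (1 - Q)/2 else Q/2)) * e xs m * d ys m xs) :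
    n * binEnt Q
      + (n * (1 - Q) - (binomCDFInv (ε * (1 + 1 / Real.sqrt n)) n (1 - Q) : ℝ) - 1)
          * Real.log ((1 - Q) / Q)
      - (1/2) * Real.log n - Real.log (1/ε)
      ≤ Real.log (Fintype.card M) :=
  exact_binomial_converse_general n hn ε Q hε0 hQ0 hQ1 hεn e he0 he1 d hd0 hd1 hcorrect
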